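/- arXiv:1504.03274 — 4 statements merged into one kernel-verified Lean document; each statement's English description precedes it below -/
import Mathlib

section
/- If for μ-almost every ω the map x ↦ L(x, ω) is convex on the convex set X, then the auxiliary function F_β(x, η) := η + (1−β)⁻¹ ∫ max(L(x, ω) − η, 0) dμ(ω) is jointly convex in (x, η) on X × ℝ. -/
open MeasureTheory Set

/-- If for μ-a.e. ω the loss `x ↦ L(x, ω)` is convex on the convex set `X`,
then `F_β(x, η) = η + (1−β)⁻¹ ∫ max(L(x, ω) − η, 0) dμ` is jointly convex on `X × ℝ`. -/
theorem cvar_auxiliary_jointly_convex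
    {n : ℕ} (X : Set (Fin n → ℝ)) (hX : Convex ℝ X)
    {Ω : Type*} [MeasurableSpace Ω] (μ : Measure Ω) [IsProbabilityMeasure μ]
    (L : (Fin n → ℝ) → Ω → ℝ)
    (hint : ∀ x ∈ X, Integrable (fun ω => L x ω) μ)
    (β : ℝ) (hβ : β ∈ Set.Ioo (0 : ℝ) 1)
    (hconv : ∀ᵐ ω ∂μ, ConvexOn ℝ X (fun x => L x ω)) :
    ConvexOn ℝ (X ×ˢ (Set.univ : Set ℝ))
      (fun q : (Fin n → ℝ) × ℝ =>
        q.2 + (1 - β)⁻¹ * ∫ ω, max (L q.1 ω - q.2) 0 ∂μ) := by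
  obtain ⟨hβ0, hβ1⟩ := hβ
  have hc : (0:ℝ) ≤ (1 - β)⁻¹ := by
    apply inv_nonneg.mpr; linarith
  have intg : ∀ x ∈ X, ∀ η : ℝ, Integrable (fun ω => max (L x ω - η) 0) μ :=
    fun x hx η => ((hint x hx).sub (integrable_const η)).pos_part
  refine ⟨hX.prod convex_univ, ?_⟩
  rintro ⟨x, η⟩ ⟨hx, -⟩ ⟨y, ζ⟩ ⟨hy, -⟩ a b ha hb hab
  have hz : a • x + b • y ∈ X := hX hx hy ha hb hab
  have hmono : ∀ᵐ ω ∂μ, max (L (a • x + b • y) ω - (a * η + b * ζ)) 0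
      ≤ a * max (L x ω - η) 0 + b * max (L y ω - ζ) 0 := by
    filter_upwards [hconv] with ω hω
    have h1 := hω.2 hx hy ha hb hab
    simp only [smul_eq_mul] at h1
    have h2 : L x ω - η ≤ max (L x ω - η) 0 := le_max_left _ _
    have h3 : L y ω - ζ ≤ max (L y ω - ζ) 0 := le_max_left _ _
    have h4 : (0:ℝ) ≤ max (L x ω - η) 0 := le_max_right _ _
    have h5 : (0:ℝ) ≤ max (L y ω - ζ) 0 := le_max_right _ _
    apply max_le
    · nlinarith
    · nlinarith
  have key : ∫ ω, max (L (a • x + b • y) ω - (a * η + b * ζ)) 0 ∂μ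
      ≤ a * (∫ ω, max (L x ω - η) 0 ∂μ) + b * (∫ ω, max (L y ω - ζ) 0 ∂μ) := by
    rw [← integral_const_mul, ← integral_const_mul, ← integral_add
      ((intg x hx η).const_mul a) ((intg y hy ζ).const_mul b)]
    exact integral_mono_ae (intg _ hz _)
      (((intg x hx η).const_mul a).add ((intg y hy ζ).const_mul b)) hmono
  simp only [Prod.fst_add, Prod.snd_add, Prod.smul_mk, Prod.fst, Prod.snd,
    smul_eq_mul, Prod.mk_add_mk, Prod.smul_fst, Prod.smul_snd]
  nlinarith [mul_le_mul_of_nonneg_left key hc]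
end

section
/- If for μ-almost every ω the map x ↦ L(x, ω) is convex on the convex set X, then the β-CVaR φ_β(x) := ⨅_{η ∈ ℝ} [ η + (1−β)⁻¹ ∫ max(L(x, ω) − η, 0) dμ(ω) ] is a convex function of x on X. -/
open MeasureTheory Set Function

/-!
For each fixed `ω`, `(x, η) ↦ max (L x ω - η) 0` is jointly convex, being the positive part of a
convex function minus a linear one. Integrating in `ω`, scaling by `(1 - β)⁻¹ ≥ 0` and adding `η`
keeps the objective `F_β(x, η)` jointly convex in `(x, η)`, and minimizing a jointly convex function
over one of its variables yields a convex function as long as the infimum is finite. Here it is,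
because `(1 - β)⁻¹ ≥ 1` makes every `F_β(x, η)` at least the mean `∫ L x dμ`.
-/

theorem ConvexOn.ciInf_right {E F : Type*} [AddCommGroup E] [Module ℝ E] [AddCommGroup F]
    [Module ℝ F] {s : Set E} {g : E → F → ℝ} (hg : ConvexOn ℝ (s ×ˢ univ) (uncurry g))
    (hbdd : ∀ x ∈ s, BddBelow (range (g x))) :
    ConvexOn ℝ s fun x => ⨅ y, g x y := by
  have hs : Convex ℝ s := by
    simpa [fst_image_prod s univ_nonempty] using hg.1.linear_image (LinearMap.fst ℝ E F)
  refine ⟨hs, fun x hx y hy a b ha hb hab => le_of_forall_pos_le_add fun ε hε => ?_⟩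
  obtain ⟨u, hu⟩ := exists_lt_of_ciInf_lt (lt_add_of_pos_right (⨅ u, g x u) hε)
  obtain ⟨v, hv⟩ := exists_lt_of_ciInf_lt (lt_add_of_pos_right (⨅ v, g y v) hε)
  calc ⨅ w, g (a • x + b • y) w
      ≤ g (a • x + b • y) (a • u + b • v) := ciInf_le (hbdd _ (hs hx hy ha hb hab)) _
    _ ≤ a • g x u + b • g y v :=
      hg.2 (mk_mem_prod hx (mem_univ u)) (mk_mem_prod hy (mem_univ v)) ha hb hab
    _ ≤ a • ((⨅ u, g x u) + ε) + b • ((⨅ v, g y v) + ε) := by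
      simp only [smul_eq_mul]
      gcongr
    _ = a • (⨅ u, g x u) + b • (⨅ v, g y v) + ε := by
      simp only [smul_eq_mul]
      linear_combination ε * hab

theorem ConvexOn.max_sub_snd {E : Type*} [AddCommGroup E] [Module ℝ E] {s : Set E} {f : E → ℝ}
    (hf : ConvexOn ℝ s f) : ConvexOn ℝ (s ×ˢ univ) fun p : E × ℝ => max (f p.1 - p.2) 0 := by
  have hfst : ConvexOn ℝ (s ×ˢ univ) fun p : E × ℝ => f p.1 := by
    rw [prod_univ]
    exact hf.comp_linearMap (LinearMap.fst ℝ E ℝ)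
  exact (hfst.sub ((LinearMap.snd ℝ E ℝ).concaveOn hfst.1)).sup (convexOn_const 0 hfst.1)

section CVaR

variable {E Ω : Type*} [MeasurableSpace Ω] (μ : Measure Ω) (L : E → Ω → ℝ) (β : ℝ)

/-- The Rockafellar–Uryasev objective `F_β(x, η)`, whose infimum over `η` is the `β`-CVaR. -/
noncomputable def cvarObjective (x : E) (η : ℝ) : ℝ :=
  η + (1 - β)⁻¹ * ∫ ω, max (L x ω - η) 0 ∂μ

variable {μ L β}

theorem convexOn_cvarObjective [AddCommGroup E] [Module ℝ E] [IsFiniteMeasure μ]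
    {X : Set E} (hX : Convex ℝ X) (hint : ∀ x ∈ X, Integrable (L x) μ) (hβ : β < 1)
    (hconv : ∀ᵐ ω ∂μ, ConvexOn ℝ X fun x => L x ω) :
    ConvexOn ℝ (X ×ˢ univ) (uncurry (cvarObjective μ L β)) := by
  have hXR : Convex ℝ (X ×ˢ (univ : Set ℝ)) := hX.prod convex_univ
  have hexcess : ConvexOn ℝ (X ×ˢ univ) fun p : E × ℝ => ∫ ω, max (L p.1 ω - p.2) 0 ∂μ :=
    integral_convexOn_of_integrand_ae hXR (hconv.mono fun _ hω => hω.max_sub_snd)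
      fun p hp => ((hint p.1 hp.1).sub (integrable_const p.2)).pos_part
  exact ((LinearMap.snd ℝ E ℝ).convexOn hXR).add
    (hexcess.smul (inv_nonneg.2 (sub_nonneg.2 hβ.le)))

theorem integral_le_cvarObjective [IsProbabilityMeasure μ] {x : E} (hx : Integrable (L x) μ)
    (hβ₀ : 0 ≤ β) (hβ₁ : β < 1) (η : ℝ) :
    ∫ ω, L x ω ∂μ ≤ cvarObjective μ L β x η := by
  have hexcess : ∫ ω, L x ω ∂μ - η ≤ ∫ ω, max (L x ω - η) 0 ∂μ := by
    calc ∫ ω, L x ω ∂μ - η = ∫ ω, (L x ω - η) ∂μ := by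
          rw [integral_sub hx (integrable_const η), integral_const, probReal_univ, one_smul]
      _ ≤ ∫ ω, max (L x ω - η) 0 ∂μ :=
          integral_mono (hx.sub (integrable_const η)) (hx.sub (integrable_const η)).pos_part
            fun ω => le_max_left _ _
  have hexcess_nonneg : 0 ≤ ∫ ω, max (L x ω - η) 0 ∂μ :=
    integral_nonneg fun ω => le_max_right _ _
  have hc : 1 ≤ (1 - β)⁻¹ := (one_le_inv₀ (by linarith)).2 (by linarith)
  unfold cvarObjective
  linarith [mul_le_mul_of_nonneg_right hc hexcess_nonneg]

end CVaR

/-- If for μ-a.e. ω the loss `x ↦ L(x, ω)` is convex on the convex set `X`,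
then the β-CVaR `φ_β(x) = ⨅_η [η + (1−β)⁻¹ ∫ max(L(x, ω) − η, 0) dμ]` is convex on `X`. -/
theorem cvar_convex
    {n : ℕ} (X : Set (Fin n → ℝ)) (hX : Convex ℝ X)
    {Ω : Type*} [MeasurableSpace Ω] (μ : Measure Ω) [IsProbabilityMeasure μ]
    (L : (Fin n → ℝ) → Ω → ℝ)
    (hint : ∀ x ∈ X, Integrable (fun ω => L x ω) μ)
    (β : ℝ) (hβ : β ∈ Set.Ioo (0 : ℝ) 1)
    (hconv : ∀ᵐ ω ∂μ, ConvexOn ℝ X (fun x => L x ω)) :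
    ConvexOn ℝ X
      (fun x => ⨅ η : ℝ, (η + (1 - β)⁻¹ * ∫ ω, max (L x ω - η) 0 ∂μ)) :=
  (convexOn_cvarObjective hX hint hβ.2 hconv).ciInf_right fun x hx =>
    ⟨∫ ω, L x ω ∂μ, forall_mem_range.2 (integral_le_cvarObjective (hint x hx) hβ.1.le hβ.2)⟩
end

section
/- The β-VaR minimizes the auxiliary function: F_β(η_β) = ⨅_{η ∈ ℝ} F_β(η); that is, the β-CVaR φ_β equals the value of F_β evaluated at the β-VaR, φ_β = F_β(η_β). -/
/-!
Push `μ` forward along `L`, so that everything is about a probability measure `ν` on `ℝ` with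
cdf `Ψ`, and `η_β` is its lower `β`-quantile. For every `x`, the indicator of any `s` with
`Ioi a ⊆ s ⊆ Ici a` gives a subgradient `-1_s(x)` of `t ↦ max (x - t) 0` at `a`; integrating,
`F_β b - F_β a ≥ (b - a) (1 - β - ν s) / (1 - β)`. At `a = η_β` right-continuity of `Ψ` gives
`ν (Ioi η_β) ≤ 1 - β`, which handles `b ≥ η_β`, and the left limit gives `ν (Ici η_β) ≥ 1 - β`,
which handles `b ≤ η_β`.
-/

open MeasureTheory Set Filter Topology ProbabilityTheory

namespace StieltjesFunction

variable (f : StieltjesFunction ℝ) {β : ℝ}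

lemma le_apply_csInf (hne : {x | β ≤ f x}.Nonempty) :
    β ≤ f (sInf {x | β ≤ f x}) := by
  refine ge_of_tendsto
    ((f.right_continuous' _).mono_left (nhdsWithin_mono _ Ioi_subset_Ici_self)) ?_
  filter_upwards [self_mem_nhdsWithin] with x hx
  obtain ⟨s, hs, hsx⟩ := exists_lt_of_csInf_lt hne hx
  exact hs.trans (f.mono hsx.le)

lemma leftLim_csInf_le (hbdd : BddBelow {x | β ≤ f x}) :
    Function.leftLim f (sInf {x | β ≤ f x}) ≤ β := by
  refine le_of_tendsto (f.mono.tendsto_leftLim _) ?_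
  filter_upwards [self_mem_nhdsWithin] with x hx
  exact (not_le.1 (notMem_of_lt_csInf (s := {x | β ≤ f x}) hx hbdd)).le

end StieltjesFunction

noncomputable def lowerQuantile (ν : Measure ℝ) (β : ℝ) : ℝ := sInf {x | β ≤ cdf ν x}

section lowerQuantile

variable (ν : Measure ℝ) {β : ℝ}

lemma nonempty_le_cdf (hβ : β < 1) : {x | β ≤ cdf ν x}.Nonempty :=
  ((tendsto_cdf_atTop ν).eventually (eventually_ge_nhds hβ)).exists

lemma bddBelow_le_cdf (hβ : 0 < β) : BddBelow {x | β ≤ cdf ν x} := by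
  obtain ⟨x₀, hx₀⟩ :=
    eventually_atBot.1 ((tendsto_cdf_atBot ν).eventually (eventually_lt_nhds hβ))
  exact ⟨x₀, fun x hx => not_lt.1 fun hlt => (hx₀ x hlt.le).not_ge hx⟩

lemma le_cdf_lowerQuantile (hβ : β < 1) : β ≤ cdf ν (lowerQuantile ν β) :=
  (cdf ν).le_apply_csInf (nonempty_le_cdf ν hβ)

lemma leftLim_cdf_lowerQuantile_le (hβ : 0 < β) :
    Function.leftLim (cdf ν) (lowerQuantile ν β) ≤ β :=
  (cdf ν).leftLim_csInf_le (bddBelow_le_cdf ν hβ)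

variable [IsProbabilityMeasure ν]

lemma measureReal_Ioi_lowerQuantile_le (hβ : β < 1) :
    ν.real (Ioi (lowerQuantile ν β)) ≤ 1 - β := by
  rw [← compl_Iic, probReal_compl_eq_one_sub measurableSet_Iic, ← cdf_eq_real]
  linarith [le_cdf_lowerQuantile ν hβ]

lemma one_sub_le_measureReal_Ici_lowerQuantile (hβ : 0 < β) :
    1 - β ≤ ν.real (Ici (lowerQuantile ν β)) := by
  have hIio : ν (Iio (lowerQuantile ν β)) =
      ENNReal.ofReal (Function.leftLim (cdf ν) (lowerQuantile ν β)) := by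
    simpa [measure_cdf] using (cdf ν).measure_Iio (tendsto_cdf_atBot ν) (lowerQuantile ν β)
  have hIio_le : ν.real (Iio (lowerQuantile ν β)) ≤ β :=
    ENNReal.toReal_le_of_le_ofReal hβ.le
      (hIio ▸ ENNReal.ofReal_le_ofReal (leftLim_cdf_lowerQuantile_le ν hβ))
  rw [← compl_Iio, probReal_compl_eq_one_sub measurableSet_Iio]
  linarith

end lowerQuantile

lemma max_sub_zero_add_mul_indicator_le {a : ℝ} {s : Set ℝ} (hIoi : Ioi a ⊆ s)
    (hIci : s ⊆ Ici a) (b x : ℝ) :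
    max (x - a) 0 + (a - b) * s.indicator 1 x ≤ max (x - b) 0 := by
  by_cases hx : x ∈ s
  · have : a ≤ x := hIci hx
    simp [hx, max_eq_left (sub_nonneg.2 this)]
  · have : x ≤ a := not_lt.1 fun h => hx (hIoi h)
    simp [hx, max_eq_right (sub_nonpos.2 this)]

lemma integral_max_sub_zero_add_mul_le {ν : Measure ℝ} [IsFiniteMeasure ν]
    (hν : Integrable id ν) {a : ℝ} {s : Set ℝ} (hs : MeasurableSet s) (hIoi : Ioi a ⊆ s)
    (hIci : s ⊆ Ici a) (b : ℝ) :
    ∫ x, max (x - a) 0 ∂ν + (a - b) * ν.real s ≤ ∫ x, max (x - b) 0 ∂ν := by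
  have hpos : ∀ c, Integrable (fun x => max (x - c) 0) ν := fun c =>
    (hν.sub (integrable_const c)).pos_part
  have hind : Integrable (fun x => (a - b) * s.indicator 1 x) ν :=
    ((integrable_const 1).indicator hs).const_mul _
  calc ∫ x, max (x - a) 0 ∂ν + (a - b) * ν.real s
      = ∫ x, (max (x - a) 0 + (a - b) * s.indicator 1 x) ∂ν := by
        rw [integral_add (hpos a) hind, integral_const_mul, integral_indicator_one hs]
    _ ≤ ∫ x, max (x - b) 0 ∂ν :=
        integral_mono ((hpos a).add hind) (hpos b)
          (max_sub_zero_add_mul_indicator_le hIoi hIci b)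

noncomputable def rockafellarUryasev (ν : Measure ℝ) (β η : ℝ) : ℝ :=
  η + (1 - β)⁻¹ * ∫ x, max (x - η) 0 ∂ν

section rockafellarUryasev

variable {ν : Measure ℝ} {β : ℝ}

lemma rockafellarUryasev_le_of_mul_nonneg [IsFiniteMeasure ν] (hν : Integrable id ν)
    (hβ : β < 1) {a b : ℝ} {s : Set ℝ} (hs : MeasurableSet s) (hIoi : Ioi a ⊆ s)
    (hIci : s ⊆ Ici a) (hab : 0 ≤ (b - a) * (1 - β - ν.real s)) :
    rockafellarUryasev ν β a ≤ rockafellarUryasev ν β b := by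
  have hc : 0 < (1 - β)⁻¹ := inv_pos.2 (sub_pos.2 hβ)
  have hI := mul_le_mul_of_nonneg_left (integral_max_sub_zero_add_mul_le hν hs hIoi hIci b) hc.le
  have hgap : (1 - β)⁻¹ * ((b - a) * (1 - β - ν.real s)) =
      b - a - (1 - β)⁻¹ * ((b - a) * ν.real s) := by
    field_simp [(sub_pos.2 hβ).ne']
  unfold rockafellarUryasev
  linarith [mul_nonneg hc.le hab]

lemma rockafellarUryasev_lowerQuantile_le [IsProbabilityMeasure ν] (hν : Integrable id ν)
    (hβ : β ∈ Ioo 0 1) (η : ℝ) :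
    rockafellarUryasev ν β (lowerQuantile ν β) ≤ rockafellarUryasev ν β η := by
  rcases le_total (lowerQuantile ν β) η with h | h
  · refine rockafellarUryasev_le_of_mul_nonneg hν hβ.2 measurableSet_Ioi subset_rfl
      Ioi_subset_Ici_self (mul_nonneg (sub_nonneg.2 h) ?_)
    linarith [measureReal_Ioi_lowerQuantile_le ν hβ.2]
  · refine rockafellarUryasev_le_of_mul_nonneg hν hβ.2 measurableSet_Ici Ioi_subset_Ici_self
      subset_rfl (mul_nonneg_of_nonpos_of_nonpos (sub_nonpos.2 h) ?_)
    linarith [one_sub_le_measureReal_Ici_lowerQuantile ν hβ.1]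

end rockafellarUryasev

/-- The β-VaR minimizes the auxiliary function: `F_β(η_β) = ⨅_η F_β(η)`,
i.e. the β-CVaR `φ_β` equals `F_β(η_β)`. -/
theorem var_minimizes_auxiliary
    {Ω : Type*} [MeasurableSpace Ω] (μ : Measure Ω) [IsProbabilityMeasure μ]
    (L : Ω → ℝ) (hL : Integrable L μ)
    (β : ℝ) (hβ : β ∈ Set.Ioo (0 : ℝ) 1)
    (ηβ : ℝ) (hηβ : ηβ = sInf {η : ℝ | β ≤ (μ {ω | L ω ≤ η}).toReal})
    (Fb : ℝ → ℝ)
    (hFb : ∀ η, Fb η = η + (1 - β)⁻¹ * ∫ ω, max (L ω - η) 0 ∂μ) :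
    Fb ηβ = ⨅ η : ℝ, Fb η := by
  set ν := μ.map L
  have hLm := hL.aemeasurable
  have : IsProbabilityMeasure ν := Measure.isProbabilityMeasure_map hLm
  have hν : Integrable id ν := (integrable_map_measure aestronglyMeasurable_id hLm).2 hL
  have hVaR : ηβ = lowerQuantile ν β := by
    rw [hηβ, lowerQuantile]
    congr! 3 with η
    rw [cdf_eq_real, measureReal_def, Measure.map_apply_of_aemeasurable hLm measurableSet_Iic]
    rfl
  have hF : Fb = rockafellarUryasev ν β := by
    ext η
    rw [hFb, rockafellarUryasev, integral_map hLm (by fun_prop)]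
  have hleast : IsLeast (range (rockafellarUryasev ν β))
      (rockafellarUryasev ν β (lowerQuantile ν β)) :=
    ⟨mem_range_self _, forall_mem_range.2 (rockafellarUryasev_lowerQuantile_le hν hβ)⟩
  rw [hF, hVaR]
  exact hleast.isGLB.ciInf_eq.symm
end

section
/- CVaR is an upper bound of VaR: the β-CVaR is at least the β-VaR, i.e. φ_β ≥ η_β. -/
open MeasureTheory Set ProbabilityTheory

/-!
Fix `η` and write `c = F_β(η)`. For every `t > c`, Markov's inequality applied to `(L - η)⁺` at
level `t - η > 0` gives `(t - η) μ{L ≥ t} ≤ (1 - β)(c - η) < (1 - β)(t - η)`, so `Ψ(t) > β`.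
Since `Ψ` is the CDF of the law of `L`, the set `{Ψ ≥ β}` is bounded below, hence `η_β ≤ t`
for all `t > c`, i.e. `η_β ≤ c`.
-/

lemma bddBelow_setOf_le_cdf (ν : Measure ℝ) {β : ℝ} (hβ : 0 < β) :
    BddBelow {x | β ≤ cdf ν x} := by
  obtain ⟨x₀, hx₀⟩ :=
    ((tendsto_cdf_atBot (μ := ν)).eventually (gt_mem_nhds hβ)).exists_forall_of_atBot
  refine ⟨x₀, fun x hx => ?_⟩
  by_contra! hlt
  exact (hx₀ x hlt.le).not_ge hx

section

variable {Ω : Type*} [MeasurableSpace Ω] {μ : Measure Ω} {L : Ω → ℝ}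

lemma measureReal_setOf_le_eq_cdf_map [IsProbabilityMeasure μ] (hL : AEMeasurable L μ) (x : ℝ) :
    μ.real {ω | L ω ≤ x} = cdf (μ.map L) x := by
  have := Measure.isProbabilityMeasure_map hL
  rw [cdf_eq_real, measureReal_def, measureReal_def,
    Measure.map_apply₀ hL measurableSet_Iic.nullMeasurableSet]
  rfl

lemma sub_mul_measureReal_le_integral_max_sub [IsFiniteMeasure μ] (hL : Integrable L μ)
    {η t : ℝ} (hηt : η < t) :
    (t - η) * μ.real {ω | t ≤ L ω} ≤ ∫ ω, max (L ω - η) 0 ∂μ := by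
  have hset : {ω | t ≤ L ω} = {ω | t - η ≤ max (L ω - η) 0} := by
    ext ω
    change t ≤ L ω ↔ t - η ≤ max (L ω - η) 0
    refine ⟨fun h => le_max_of_le_left (sub_le_sub_right h η), fun h => ?_⟩
    rcases le_max_iff.1 h with h | h <;> linarith
  rw [hset]
  exact mul_meas_ge_le_integral_of_nonneg (ae_of_all _ fun ω => le_max_right _ _)
    (hL.sub (integrable_const η)).pos_part _

lemma lt_measureReal_setOf_le [IsProbabilityMeasure μ] (hL : Integrable L μ) {β η t : ℝ}
    (hβ : β < 1) (ht : η + (1 - β)⁻¹ * ∫ ω, max (L ω - η) 0 ∂μ < t) :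
    β < μ.real {ω | L ω ≤ t} := by
  have h1β : 0 < 1 - β := sub_pos.2 hβ
  have hηt : η < t := by
    have : 0 ≤ (1 - β)⁻¹ * ∫ ω, max (L ω - η) 0 ∂μ :=
      mul_nonneg (inv_nonneg.2 h1β.le) (integral_nonneg fun ω => le_max_right _ _)
    linarith
  have hmarkov := sub_mul_measureReal_le_integral_max_sub hL hηt
  have hint : ∫ ω, max (L ω - η) 0 ∂μ < (1 - β) * (t - η) := by
    rwa [← lt_sub_iff_add_lt', inv_mul_lt_iff₀ h1β] at ht
  have htail : μ.real {ω | t ≤ L ω} < 1 - β :=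
    lt_of_mul_lt_mul_left (by linarith) (sub_pos.2 hηt).le
  have hcover : 1 ≤ μ.real {ω | L ω ≤ t} + μ.real {ω | t ≤ L ω} := by
    calc 1 = μ.real ({ω | L ω ≤ t} ∪ {ω | t ≤ L ω}) := by
          rw [show {ω | L ω ≤ t} ∪ {ω | t ≤ L ω} = univ from
            eq_univ_of_forall fun ω => le_total (L ω) t, probReal_univ]
      _ ≤ _ := measureReal_union_le _ _
  linarith

end

/-- CVaR is an upper bound of VaR: `φ_β ≥ η_β`. -/
theorem cvar_ge_var
    {Ω : Type*} [MeasurableSpace Ω] (μ : Measure Ω) [IsProbabilityMeasure μ]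
    (L : Ω → ℝ) (hL : Integrable L μ)
    (β : ℝ) (hβ : β ∈ Set.Ioo (0 : ℝ) 1)
    (ηβ : ℝ) (hηβ : ηβ = sInf {η : ℝ | β ≤ (μ {ω | L ω ≤ η}).toReal}) :
    ηβ ≤ ⨅ η : ℝ, (η + (1 - β)⁻¹ * ∫ ω, max (L ω - η) 0 ∂μ) := by
  obtain ⟨hβ0, hβ1⟩ := hβ
  have hbdd : BddBelow {η : ℝ | β ≤ (μ {ω | L ω ≤ η}).toReal} := by
    simpa only [← measureReal_def, measureReal_setOf_le_eq_cdf_map hL.aemeasurable]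
      using bddBelow_setOf_le_cdf (μ.map L) hβ0
  subst hηβ
  refine le_ciInf fun η => le_of_forall_gt_imp_ge_of_dense fun t ht => csInf_le hbdd ?_
  exact (lt_measureReal_setOf_le hL hβ1 ht).le
end
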